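/- Let R = k[x,y,z]/(x²-y², y²-z²) with char k ≠ 2. For each singular conic with factorization Q = l⁺ l⁻ into linear forms (Q₀ = (x-y)(x+y), Q₁ = (x+z)(x-z), Q_∞ = (y+z)(y-z)), multiplication by l⁺ and l⁻ on R(-1) → R gives a matrix factorization: l⁺ · l⁻ = 0 in R, and the 2-periodic complex ··· → R(-2) →^{l⁻} R(-1) →^{l⁺} R is exact in positive homological degrees. -/
import Mathlib


open MvPolynomial

noncomputable section

variable (k : Type) [Field k]

def fourPtsIdeal : Ideal (MvPolynomial (Fin 3) k) :=
  Ideal.span {(X 0 : MvPolynomial (Fin 3) k) ^ 2 - X 1 ^ 2,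
              (X 1 : MvPolynomial (Fin 3) k) ^ 2 - X 2 ^ 2}

/-- `R = k[x,y,z]/(x² - y², y² - z²)`. -/
def Rring := MvPolynomial (Fin 3) k ⧸ fourPtsIdeal k

instance : CommRing (Rring k) := Ideal.Quotient.commRing _

/-- The images in `R` of the linear factors `l⁺` of the three singular conics:
`Q₀ = (x-y)(x+y)`, `Q₁ = (x+z)(x-z)`, `Q_∞ = (y+z)(y-z)`. -/
def lplus : Fin 3 → Rring k := fun i =>
  Ideal.Quotient.mk (fourPtsIdeal k) (![X 0 - X 1, X 0 + X 2, X 1 + X 2] i)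

/-- The images in `R` of the corresponding linear factors `l⁻`. -/
def lminus : Fin 3 → Rring k := fun i =>
  Ideal.Quotient.mk (fourPtsIdeal k) (![X 0 + X 1, X 0 - X 2, X 1 - X 2] i)

/-- Any polynomial is congruent to its image under a substitution `g` modulo the
ideal generated by `u`, provided each `X j - g j` lies in that ideal. -/
lemma sub_aeval_mem (u : MvPolynomial (Fin 3) k) (g : Fin 3 → MvPolynomial (Fin 3) k)
    (hg : ∀ j, X j - g j ∈ Ideal.span {u}) (p : MvPolynomial (Fin 3) k) :
    p - aeval g p ∈ Ideal.span {u} := by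
  induction p using MvPolynomial.induction_on with
  | C a => simp
  | add p q hp hq =>
      have h := Ideal.add_mem _ hp hq
      have : p + q - aeval g (p + q) = (p - aeval g p) + (q - aeval g q) := by
        simp only [map_add]; ring
      rw [this]; exact h
  | mul_X p n hp =>
      have : p * X n - aeval g (p * X n)
          = (p - aeval g p) * X n + aeval g p * (X n - g n) := by
        simp only [map_mul, aeval_X]; ring
      rw [this]
      exact Ideal.add_mem _ (Ideal.mul_mem_right _ _ hp) (Ideal.mul_mem_left _ _ (hg n))

/-- Key lemma: if `u` is a nonzero polynomial, `g` a substitution with `aeval g u = 0`,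
`aeval g w ≠ 0`, and `X j - g j ∈ (u)`, then `u * r ∈ (u*v, w)` implies
`r ≡ v * s mod (u*v, w)` for some `s`. -/
lemma key (u v w : MvPolynomial (Fin 3) k) (hu : u ≠ 0)
    (g : Fin 3 → MvPolynomial (Fin 3) k)
    (hgu : aeval g u = 0) (hgw : aeval g w ≠ 0)
    (hg : ∀ j, X j - g j ∈ Ideal.span {u})
    (r : MvPolynomial (Fin 3) k) (hr : u * r ∈ Ideal.span {u * v, w}) :
    ∃ s, r - v * s ∈ Ideal.span {u * v, w} := by
  rw [Ideal.mem_span_pair] at hr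
  obtain ⟨a, b, hab⟩ := hr
  have h1 : u * (r - a * v) = b * w := by linear_combination -hab
  have h2 : aeval g b * aeval g w = 0 := by
    have h := congrArg (aeval g) h1
    simp only [map_mul, map_sub, hgu, zero_mul] at h
    exact h.symm
  have hb0 : aeval g b = 0 := by
    rcases mul_eq_zero.mp h2 with h | h
    · exact h
    · exact absurd h hgw
  have hbu : b ∈ Ideal.span {u} := by
    have h := sub_aeval_mem k u g hg b
    rwa [hb0, sub_zero] at h
  rw [Ideal.mem_span_singleton] at hbu
  obtain ⟨c, rfl⟩ := hbu
  have h3 : r - a * v = c * w := by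
    apply mul_left_cancel₀ hu
    linear_combination h1
  refine ⟨a, ?_⟩
  rw [Ideal.mem_span_pair]
  exact ⟨0, c, by linear_combination -h3⟩

lemma assemble (u v w : MvPolynomial (Fin 3) k)
    (hI : fourPtsIdeal k = Ideal.span {u * v, w})
    (hu : u ≠ 0) (hv : v ≠ 0)
    (gu gv : Fin 3 → MvPolynomial (Fin 3) k)
    (hgu : aeval gu u = 0) (hguw : aeval gu w ≠ 0)
    (hgu' : ∀ j, X j - gu j ∈ Ideal.span {u})
    (hgv : aeval gv v = 0) (hgvw : aeval gv w ≠ 0)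
    (hgv' : ∀ j, X j - gv j ∈ Ideal.span {v}) :
    (Ideal.Quotient.mk (fourPtsIdeal k) u * Ideal.Quotient.mk (fourPtsIdeal k) v = 0) ∧
    (∀ r : MvPolynomial (Fin 3) k ⧸ fourPtsIdeal k, Ideal.Quotient.mk (fourPtsIdeal k) u * r = 0 →
      ∃ s, r = Ideal.Quotient.mk (fourPtsIdeal k) v * s) ∧
    (∀ r : MvPolynomial (Fin 3) k ⧸ fourPtsIdeal k, Ideal.Quotient.mk (fourPtsIdeal k) v * r = 0 →
      ∃ s, r = Ideal.Quotient.mk (fourPtsIdeal k) u * s) := by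
  have hswap : Ideal.span {v * u, w} = Ideal.span {u * v, w} := by rw [mul_comm]
  refine ⟨?_, ?_, ?_⟩
  · rw [← map_mul, Ideal.Quotient.eq_zero_iff_mem, hI]
    exact Ideal.subset_span (Set.mem_insert _ _)
  · intro r hr
    obtain ⟨p, rfl⟩ := Ideal.Quotient.mk_surjective r
    rw [← map_mul, Ideal.Quotient.eq_zero_iff_mem, hI] at hr
    obtain ⟨s, hs⟩ := key k u v w hu gu hgu hguw hgu' p hr
    refine ⟨Ideal.Quotient.mk _ s, ?_⟩
    rw [← map_mul, Ideal.Quotient.eq, hI]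
    exact hs
  · intro r hr
    obtain ⟨p, rfl⟩ := Ideal.Quotient.mk_surjective r
    rw [← map_mul, Ideal.Quotient.eq_zero_iff_mem, hI, ← hswap] at hr
    obtain ⟨s, hs⟩ := key k v u w hv gv hgv hgvw hgv' p hr
    refine ⟨Ideal.Quotient.mk _ s, ?_⟩
    rw [← map_mul, Ideal.Quotient.eq, hI, ← hswap]
    exact hs

lemma ideal_eq_case (A B a b : MvPolynomial (Fin 3) k)
    (h1 : ∃ c d, c * a + d * b = A) (h2 : ∃ c d, c * a + d * b = B)
    (h3 : ∃ c d, c * A + d * B = a) (h4 : ∃ c d, c * A + d * B = b) :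
    Ideal.span {A, B} = Ideal.span {a, b} := by
  apply le_antisymm <;> rw [Ideal.span_le] <;> intro q hq <;>
    simp only [Set.mem_insert_iff, Set.mem_singleton_iff] at hq <;>
    rcases hq with rfl | rfl <;> rw [SetLike.mem_coe, Ideal.mem_span_pair] <;>
    assumption

/-- for each singular conic `Q = l⁺l⁻` of the pencil, the pair
`(l⁺, l⁻)` is a matrix factorization of size one over `R`: `l⁺ · l⁻ = 0` in `R`, and
the 2-periodic complex `⋯ → R →^{l⁻} R →^{l⁺} R` is exact in positive homological
degrees, i.e. `ker(l⁺·) = im(l⁻·)` and `ker(l⁻·) = im(l⁺·)`. -/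
theorem stmt_5 (hchar : (2 : k) ≠ 0) (i : Fin 3) :
    (lplus k i * lminus k i = 0) ∧
    (∀ r : Rring k, lplus k i * r = 0 → ∃ s : Rring k, r = lminus k i * s) ∧
    (∀ r : Rring k, lminus k i * r = 0 → ∃ s : Rring k, r = lplus k i * s) := by
  have hq12 : (X 1 : MvPolynomial (Fin 3) k) ^ 2 - X 2 ^ 2 ≠ 0 := by
    intro h; have := congrArg (eval ![0, 1, 0]) h; simp at this
  have hq02 : (X 0 : MvPolynomial (Fin 3) k) ^ 2 - X 2 ^ 2 ≠ 0 := by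
    intro h; have := congrArg (eval ![1, 0, 0]) h; simp at this
  have hq01 : (X 0 : MvPolynomial (Fin 3) k) ^ 2 - X 1 ^ 2 ≠ 0 := by
    intro h; have := congrArg (eval ![1, 0, 0]) h; simp at this
  have hl01m : (X 0 : MvPolynomial (Fin 3) k) - X 1 ≠ 0 := by
    intro h; have := congrArg (eval ![1, 0, 0]) h; simp at this
  have hl01p : (X 0 : MvPolynomial (Fin 3) k) + X 1 ≠ 0 := by
    intro h; have := congrArg (eval ![1, 0, 0]) h; simp at this
  have hl02m : (X 0 : MvPolynomial (Fin 3) k) - X 2 ≠ 0 := by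
    intro h; have := congrArg (eval ![1, 0, 0]) h; simp at this
  have hl02p : (X 0 : MvPolynomial (Fin 3) k) + X 2 ≠ 0 := by
    intro h; have := congrArg (eval ![1, 0, 0]) h; simp at this
  have hl12m : (X 1 : MvPolynomial (Fin 3) k) - X 2 ≠ 0 := by
    intro h; have := congrArg (eval ![0, 1, 0]) h; simp at this
  have hl12p : (X 1 : MvPolynomial (Fin 3) k) + X 2 ≠ 0 := by
    intro h; have := congrArg (eval ![0, 1, 0]) h; simp at this
  fin_cases i
  · refine assemble k (X 0 - X 1) (X 0 + X 1) (X 1 ^ 2 - X 2 ^ 2) ?_ hl01m hl01p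
      ![X 1, X 1, X 2] ![-(X 1), X 1, X 2] (by simp) (by simpa using hq12) ?_
      (by simp) (by simpa using hq12) ?_
    · exact (ideal_eq_case k _ _ _ _ ⟨1, 0, by ring⟩ ⟨0, 1, by ring⟩
        ⟨1, 0, by ring⟩ ⟨0, 1, by ring⟩).symm
    · intro j; fin_cases j <;> simp <;>
        exact Ideal.mem_span_singleton.mpr ⟨1, by ring⟩
    · intro j; fin_cases j <;> simp <;>
        exact Ideal.mem_span_singleton.mpr ⟨1, by ring⟩
  · refine assemble k (X 0 + X 2) (X 0 - X 2) (X 1 ^ 2 - X 2 ^ 2) ?_ hl02p hl02m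
      ![-(X 2), X 1, X 2] ![X 2, X 1, X 2] (by simp) (by simpa using hq12) ?_
      (by simp) (by simpa using hq12) ?_
    · exact (ideal_eq_case k _ _ _ _ ⟨1, 1, by ring⟩ ⟨0, 1, by ring⟩
        ⟨1, -1, by ring⟩ ⟨0, 1, by ring⟩).symm
    · intro j; fin_cases j <;> simp <;>
        exact Ideal.mem_span_singleton.mpr ⟨1, by ring⟩
    · intro j; fin_cases j <;> simp <;>
        exact Ideal.mem_span_singleton.mpr ⟨1, by ring⟩
  · refine assemble k (X 1 + X 2) (X 1 - X 2) (X 0 ^ 2 - X 1 ^ 2) ?_ hl12p hl12m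
      ![X 0, -(X 2), X 2] ![X 0, X 2, X 2] (by simp) (by simpa using hq02) ?_
      (by simp) (by simpa using hq02) ?_
    · exact (ideal_eq_case k _ _ _ _ ⟨0, 1, by ring⟩ ⟨1, 0, by ring⟩
        ⟨0, 1, by ring⟩ ⟨1, 0, by ring⟩).symm
    · intro j; fin_cases j <;> simp <;>
        exact Ideal.mem_span_singleton.mpr ⟨1, by ring⟩
    · intro j; fin_cases j <;> simp <;>
        exact Ideal.mem_span_singleton.mpr ⟨1, by ring⟩

end
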